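/- arXiv:1906.03907 — 5 statements merged into one kernel-verified Lean document; each statement's English description precedes it below -/
import Mathlib

section
/- Let H be the Hilbert space ℓ² of square-summable complex sequences indexed by ℕ, with truncation projections P_n, and let K : H → H be a compact continuous linear operator such that I + K is bijective. Then there exists N ∈ ℕ such that for every n ≥ N and every g ∈ H there is a unique u_n ∈ H with P_n u_n = u_n and P_n(u_n + K u_n) = P_n g; moreover, for each fixed g ∈ H these finite-section solutions u_n converge in norm to the unique solution u of u + K u = g as n → ∞. -/
/-! The finite-section operators `1 + Pₙ K` converge to `1 + K` in operator norm: `Pₙ → 1`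
strongly, by Banach–Steinhaus the `Pₙ` are equicontinuous, so the convergence is uniform on the
compact closure of the image of the unit ball under `K`. As the units of a Banach algebra form an
open set on which inversion is continuous, `1 + Pₙ K` is invertible for large `n` and its inverse
tends to `(1 + K)⁻¹`. Since `Pₙ` is idempotent, the finite-section system says exactly
`(1 + Pₙ K) uₙ = Pₙ g`, so `uₙ = (1 + Pₙ K)⁻¹ (Pₙ g) → (1 + K)⁻¹ g = u`. -/

open Filter Topology Metric ENNReal

section UniformOnCompact

variable {𝕜 F G : Type*} [NontriviallyNormedField 𝕜] [NormedAddCommGroup F] [NormedSpace 𝕜 F]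
  [CompleteSpace F] [NormedAddCommGroup G] [NormedSpace 𝕜 G]
  {Q : ℕ → F →L[𝕜] G} {T : F →L[𝕜] G}

theorem equicontinuous_of_tendsto_apply (hQ : ∀ y, Tendsto (fun n => Q n y) atTop (𝓝 (T y))) :
    Equicontinuous fun n => ⇑(Q n) := by
  obtain ⟨C, hC⟩ := banach_steinhaus fun y => ((hQ y).norm.bddAbove_range).exists_ge 0 |>.imp
    fun _ h n => h.2 _ ⟨n, rfl⟩
  exact ((NormedSpace.equicontinuous_TFAE Q).out 5 1).1 (⟨C, hC⟩ : ∃ C, ∀ n, ‖Q n‖ ≤ C)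

theorem tendstoUniformlyOn_of_tendsto_apply
    (hQ : ∀ y, Tendsto (fun n => Q n y) atTop (𝓝 (T y))) {S : Set F} (hS : IsCompact S) :
    TendstoUniformlyOn (fun n => ⇑(Q n)) T atTop S := by
  have h := (EquicontinuousOn.tendsto_uniformOnFun_iff_pi (𝔖 := {S | IsCompact S}) (fun _ h => h)
    (Set.sUnion_eq_univ_iff.2 fun y => ⟨{y}, isCompact_singleton, rfl⟩)
    (fun _ _ => (equicontinuous_of_tendsto_apply hQ).equicontinuousOn _) atTop T).2
    (tendsto_pi_nhds.2 hQ)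
  exact UniformOnFun.tendsto_iff_tendstoUniformlyOn.1 h S hS

end UniformOnCompact

theorem IsCompactOperator.tendsto_comp_of_tendsto_apply {𝕜 E F G : Type*} [RCLike 𝕜]
    [NormedAddCommGroup E] [NormedSpace 𝕜 E] [NormedAddCommGroup F] [NormedSpace 𝕜 F]
    [CompleteSpace F] [NormedAddCommGroup G] [NormedSpace 𝕜 G]
    {K : E →L[𝕜] F} (hK : IsCompactOperator K) {Q : ℕ → F →L[𝕜] G} {T : F →L[𝕜] G}
    (hQ : ∀ y, Tendsto (fun n => Q n y) atTop (𝓝 (T y))) :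
    Tendsto (fun n => (Q n).comp K) atTop (𝓝 (T.comp K)) := by
  have hU := Metric.tendstoUniformlyOn_iff.1
    (tendstoUniformlyOn_of_tendsto_apply hQ (hK.isCompact_closure_image_closedBall 1))
  refine Metric.tendsto_nhds.2 fun ε hε => ?_
  filter_upwards [hU (ε / 2) (half_pos hε)] with n hn
  rw [dist_eq_norm]
  refine (ContinuousLinearMap.opNorm_le_of_unit_norm (half_pos hε).le fun x hx => ?_).trans_lt
    (half_lt_self hε)
  have := hn (K x) (subset_closure ⟨x, by simp [hx], rfl⟩)
  rw [dist_comm, dist_eq_norm] at this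
  exact this.le

theorem tendsto_of_tendsto_of_eventually_apply_eq {𝕜 E : Type*} [NontriviallyNormedField 𝕜]
    [NormedAddCommGroup E] [NormedSpace 𝕜 E] [CompleteSpace E] {ι : Type*} {l : Filter ι}
    {A : ι → E →L[𝕜] E} {A₀ : E →L[𝕜] E} (hA : Tendsto A l (𝓝 A₀)) (hA₀ : IsUnit A₀)
    {b : ι → E} {b₀ : E} (hb : Tendsto b l (𝓝 b₀)) {v : ι → E}
    (hv : ∀ᶠ i in l, A i (v i) = b i) :
    Tendsto v l (𝓝 (Ring.inverse A₀ b₀)) := by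
  obtain ⟨u, rfl⟩ := hA₀
  have hinv : Tendsto (fun i => Ring.inverse (A i)) l (𝓝 (Ring.inverse (u : E →L[𝕜] E))) :=
    (NormedRing.inverse_continuousAt u).tendsto.comp hA
  refine ((isBoundedBilinearMap_apply.continuous.tendsto _).comp (hinv.prodMk_nhds hb)).congr' ?_
  filter_upwards [hv, hA.eventually (Units.isOpen.mem_nhds u.isUnit)] with i hvi hAi
  rw [Function.comp_apply, ← hvi]
  exact congr($(Ring.inverse_mul_cancel _ hAi) (v i))

section Truncation

variable {E : ℕ → Type*} [∀ i, NormedAddCommGroup (E i)] {p : ℝ≥0∞} {P : ℕ → lp E p → lp E p}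

theorem eq_sum_single_of_truncation (hP : ∀ n u k, P n u k = if k < n then u k else 0)
    (n : ℕ) (u : lp E p) : P n u = ∑ i ∈ Finset.range n, lp.single p i (u i) := by
  ext k
  rw [hP, lp.coeFn_sum, Finset.sum_apply]
  by_cases hk : k < n <;> simp [hk]

theorem tendsto_truncation [Fact (1 ≤ p)] (hp : p ≠ ∞)
    (hP : ∀ n u k, P n u k = if k < n then u k else 0) (u : lp E p) :
    Tendsto (fun n => P n u) atTop (𝓝 u) := by
  simpa only [eq_sum_single_of_truncation hP] using (lp.hasSum_single hp u).tendsto_sum_nat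

theorem truncation_idem (hP : ∀ n u k, P n u k = if k < n then u k else 0) (n : ℕ)
    (u : lp E p) : P n (P n u) = P n u := by
  ext k
  simp only [hP]
  split_ifs <;> rfl

end Truncation

theorem finiteSection_iff {R M : Type*} [Semiring R] [TopologicalSpace M] [AddCommGroup M]
    [ContinuousAdd M] [Module R M] {Q : M →L[R] M} (hQ : IsIdempotentElem Q) (K : M →L[R] M)
    (g u : M) : (Q u = u ∧ Q (u + K u) = Q g) ↔ (1 + Q.comp K) u = Q g := by
  change _ ↔ u + Q (K u) = Q g
  rw [map_add]
  constructor
  · rintro ⟨hu, hg⟩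
    rwa [hu] at hg
  · intro h
    have hQQ (x : M) : Q (Q x) = Q x := congr($hQ x)
    have hu : Q u = u := by
      rw [eq_sub_of_add_eq h, map_sub, hQQ, hQQ]
    exact ⟨hu, by rwa [hu]⟩

/-- Finite section method for second kind equations on `ℓ²`: if `K` is compact and
`I + K` is bijective, then for all sufficiently large `n` the finite section equations
`P n (u + K u) = P n g` with `P n u = u` are uniquely solvable, and the finite-section
solutions converge in norm to the true solution of `u + K u = g`. -/
theorem finite_section_method_second_kind
    (P : ℕ → (lp (fun _ : ℕ => ℂ) 2 →L[ℂ] lp (fun _ : ℕ => ℂ) 2))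
    (hP : ∀ (n : ℕ) (u : lp (fun _ : ℕ => ℂ) 2) (k : ℕ),
      (P n u) k = if k < n then u k else 0)
    (K : lp (fun _ : ℕ => ℂ) 2 →L[ℂ] lp (fun _ : ℕ => ℂ) 2)
    (hK : IsCompactOperator K)
    (hbij : Function.Bijective (fun u : lp (fun _ : ℕ => ℂ) 2 => u + K u)) :
    ∃ N : ℕ,
      (∀ n, N ≤ n → ∀ g : lp (fun _ : ℕ => ℂ) 2,
        ∃! un : lp (fun _ : ℕ => ℂ) 2, P n un = un ∧ P n (un + K un) = P n g) ∧
      (∀ g u : lp (fun _ : ℕ => ℂ) 2, u + K u = g →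
        ∀ v : ℕ → lp (fun _ : ℕ => ℂ) 2,
          (∀ n, N ≤ n → P n (v n) = v n ∧ P n (v n + K (v n)) = P n g) →
          Filter.Tendsto v Filter.atTop (nhds u)) := by
  have hPu (u) : Tendsto (fun n => P n u) atTop (𝓝 u) := tendsto_truncation (by norm_num) hP u
  have hPidem (n) : IsIdempotentElem (P n) := ContinuousLinearMap.ext (truncation_idem hP n)
  have hA : IsUnit (1 + K) := ContinuousLinearMap.isUnit_iff_bijective.2 hbij
  have hAn : Tendsto (fun n => 1 + (P n).comp K) atTop (𝓝 (1 + K)) := by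
    simpa [ContinuousLinearMap.one_def] using
      tendsto_const_nhds.add (hK.tendsto_comp_of_tendsto_apply (T := 1) hPu)
  obtain ⟨N, hN⟩ := eventually_atTop.1 (hAn.eventually (Units.isOpen.mem_nhds hA))
  refine ⟨N, fun n hn g => ?_, fun g u hu v hv => ?_⟩
  · simp_rw [finiteSection_iff (hPidem n)]
    exact (ContinuousLinearMap.isUnit_iff_bijective.1 (hN n hn)).existsUnique _
  · have hv' : ∀ᶠ n in atTop, (1 + (P n).comp K) (v n) = P n g :=
      eventually_atTop.2 ⟨N, fun n hn => (finiteSection_iff (hPidem n) K g (v n)).1 (hv n hn)⟩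
    have hlim := tendsto_of_tendsto_of_eventually_apply_eq hAn hA (hPu g) hv'
    rwa [← hu, show u + K u = (1 + K) u from rfl,
      show Ring.inverse (1 + K) ((1 + K) u) = u from congr($(Ring.inverse_mul_cancel _ hA) u)]
      at hlim
end

section
/- Let H be the Hilbert space ℓ² of square-summable complex sequences indexed by ℕ with standard orthonormal basis (e_k). Let a, b : ℤ → ℂ be finitely supported, and let c : ℤ → ℂ be their convolution, c(k) = Σ_{j ∈ ℤ} a(j)·b(k−j). Suppose T_a, T_b, T_c : H → H are continuous linear operators with matrix entries ⟨T_a e_n, e_m⟩ = a(m−n), ⟨T_b e_n, e_m⟩ = b(m−n), ⟨T_c e_n, e_m⟩ = c(m−n) for all m, n ∈ ℕ, and suppose H_a, H_b̃ : H → H are continuous linear operators with matrix entries ⟨H_a e_n, e_m⟩ = a(m+n+1) and ⟨H_b̃ e_n, e_m⟩ = b(−m−n−1) for all m, n ∈ ℕ. Then T_a ∘ T_b = T_c − H_a ∘ H_b̃. -/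
open scoped BigOperators

namespace ToeplitzAux

noncomputable abbrev H := lp (fun _ : ℕ => ℂ) 2

lemma single_one_apply (m k : ℕ) : (lp.single 2 m (1 : ℂ) : H) k = if k = m then 1 else 0 := by
  rw [lp.single_apply]
  split <;> simp_all

/-- Two continuous linear operators on `ℓ²` agreeing on the standard basis are equal. -/
lemma ext_single (S T : H →L[ℂ] H)
    (h : ∀ n : ℕ, S (lp.single 2 n 1) = T (lp.single 2 n 1)) : S = T := by
  apply ContinuousLinearMap.ext
  intro f
  have hf := lp.hasSum_single (E := fun _ : ℕ => ℂ) (p := 2) (by norm_num) f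
  have hS := hf.mapL S
  have hT := hf.mapL T
  have key : ∀ i : ℕ, S (lp.single 2 i (f i)) = T (lp.single 2 i (f i)) := by
    intro i
    have hi : lp.single 2 i (f i) = (f i) • (lp.single 2 i (1 : ℂ) : H) := by
      rw [← lp.single_smul]; norm_num
    rw [hi, map_smul, map_smul, h i]
  simp only [key] at hS
  exact hS.unique hT

/-- Expansion of the image of a basis vector as a finite combination of basis vectors. -/
lemma image_eq_sum (T : H →L[ℂ] H) (g : ℕ → ℂ) (N : Finset ℕ) (x : H)
    (hx : ∀ m : ℕ, (T x) m = g m) (hN : ∀ m : ℕ, g m ≠ 0 → m ∈ N) :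
    T x = ∑ m ∈ N, g m • (lp.single 2 m (1 : ℂ) : H) := by
  apply lp.ext
  funext k
  rw [lp.coeFn_sum, Finset.sum_apply, hx k]
  simp only [lp.coeFn_smul, Pi.smul_apply, single_one_apply, smul_eq_mul]
  simp only [mul_ite, mul_one, mul_zero, Finset.sum_ite_eq]
  split
  · rfl
  · rename_i hk
    by_contra h0
    exact hk (hN k h0)

end ToeplitzAux

open ToeplitzAux in
/-- Toeplitz product formula on `ℓ²`: `T_a T_b = T_{ab} - H_a H_{b̃}`, where `c` is the
convolution of the finitely supported symbol coefficient sequences `a` and `b`, and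
`H_a`, `H_b̃` are the associated Hankel operators. -/
theorem toeplitz_product_hankel
    (a b c : ℤ → ℂ)
    (ha : (Function.support a).Finite) (hb : (Function.support b).Finite)
    (hc : ∀ k : ℤ, c k = ∑ᶠ j : ℤ, a j * b (k - j))
    (Ta Tb Tc Ha Hb : lp (fun _ : ℕ => ℂ) 2 →L[ℂ] lp (fun _ : ℕ => ℂ) 2)
    (hTa : ∀ m n : ℕ, (Ta (lp.single 2 n 1)) m = a ((m : ℤ) - (n : ℤ)))
    (hTb : ∀ m n : ℕ, (Tb (lp.single 2 n 1)) m = b ((m : ℤ) - (n : ℤ)))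
    (hTc : ∀ m n : ℕ, (Tc (lp.single 2 n 1)) m = c ((m : ℤ) - (n : ℤ)))
    (hHa : ∀ m n : ℕ, (Ha (lp.single 2 n 1)) m = a ((m : ℤ) + (n : ℤ) + 1))
    (hHb : ∀ m n : ℕ, (Hb (lp.single 2 n 1)) m = b (-(m : ℤ) - (n : ℤ) - 1)) :
    Ta.comp Tb = Tc - Ha.comp Hb := by
  apply ext_single
  intro n
  -- the finite sets of indices
  set N : Finset ℕ := hb.toFinset.image (fun j => (j + (n : ℤ)).toNat) with hNdef
  set M : Finset ℕ := hb.toFinset.image (fun j => (-j - (n : ℤ) - 1).toNat) with hMdef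
  have hNmem : ∀ m : ℕ, b ((m : ℤ) - n) ≠ 0 → m ∈ N := by
    intro m hm
    refine Finset.mem_image.2 ⟨(m : ℤ) - n, hb.mem_toFinset.2 hm, ?_⟩
    omega
  have hMmem : ∀ m : ℕ, b (-(m : ℤ) - n - 1) ≠ 0 → m ∈ M := by
    intro m hm
    refine Finset.mem_image.2 ⟨-(m : ℤ) - n - 1, hb.mem_toFinset.2 hm, ?_⟩
    omega
  -- expansions of Tb and Hb on basis vectors
  have hTbe : Tb (lp.single 2 n 1) =
      ∑ m ∈ N, b ((m : ℤ) - n) • (lp.single 2 m (1 : ℂ) : H) :=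
    image_eq_sum Tb _ N _ (fun m => hTb m n) hNmem
  have hHbe : Hb (lp.single 2 n 1) =
      ∑ m ∈ M, b (-(m : ℤ) - n - 1) • (lp.single 2 m (1 : ℂ) : H) :=
    image_eq_sum Hb _ M _ (fun m => hHb m n) hMmem
  -- compute coordinates of both sides
  simp only [ContinuousLinearMap.comp_apply, ContinuousLinearMap.sub_apply]
  rw [hTbe, hHbe, map_sum, map_sum]
  apply lp.ext
  funext k
  rw [lp.coeFn_sub, Pi.sub_apply, lp.coeFn_sum, lp.coeFn_sum, Finset.sum_apply,
    Finset.sum_apply, hTc k n, hc]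
  simp only [map_smul, lp.coeFn_smul, Pi.smul_apply, smul_eq_mul, hTa, hHa]
  -- now a purely algebraic identity about finite sums
  have step1 : (∑ᶠ j : ℤ, a j * b ((k : ℤ) - n - j))
      = ∑ᶠ m : ℤ, b ((m : ℤ) - n) * a ((k : ℤ) - m) := by
    rw [← finsum_comp_equiv (Equiv.subLeft (k : ℤ)) (f := fun j => a j * b ((k : ℤ) - n - j))]
    refine finsum_congr fun m => ?_
    simp [Equiv.subLeft, mul_comm]
  -- split the ℤ-indexed sum into nonnegative and negative parts
  set g : ℤ → ℂ := fun m => b (m - n) * a ((k : ℤ) - m) with hg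
  have hgsupp : (Function.support g).Finite := by
    apply (hb.image (fun j => j + (n : ℤ))).subset
    intro m hm
    have hbm : b (m - n) ≠ 0 := fun h => hm (by simp [hg, h])
    exact ⟨m - n, hbm, by ring⟩
  have hsplit : (∑ᶠ m : ℤ, g m)
      = (∑ᶠ m : ℕ, g m) + ∑ᶠ m : ℕ, g (-(m : ℤ) - 1) := by
    have hunion : (Set.range ((↑) : ℕ → ℤ)) ∪ (Set.range (fun m : ℕ => -(m : ℤ) - 1))
        = Set.univ := by
      ext x
      simp only [Set.mem_union, Set.mem_range, Set.mem_univ, iff_true]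
      rcases le_or_gt 0 x with h | h
      · exact Or.inl ⟨x.toNat, by omega⟩
      · exact Or.inr ⟨(-x - 1).toNat, by omega⟩
    have hdisj : Disjoint (Set.range ((↑) : ℕ → ℤ)) (Set.range (fun m : ℕ => -(m : ℤ) - 1)) := by
      rw [Set.disjoint_left]
      rintro x ⟨p, rfl⟩ ⟨q, hq⟩
      have h' : -(q : ℤ) - 1 = (p : ℤ) := hq
      omega
    rw [← finsum_mem_univ, ← hunion,
      finsum_mem_union' hdisj (hgsupp.inter_of_right _) (hgsupp.inter_of_right _),
      finsum_mem_range (fun p q h => by simpa using h), finsum_mem_range (f := g)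
        (g := fun m : ℕ => -(m : ℤ) - 1)
        (fun p q h => by have h' : -(p : ℤ) - 1 = -(q : ℤ) - 1 := h; omega)]
  have hNat : (∑ᶠ m : ℕ, g m) = ∑ m ∈ N, b ((m : ℤ) - n) * a ((k : ℤ) - m) := by
    refine finsum_eq_finset_sum_of_support_subset _ fun m hm => ?_
    refine hNmem m fun h => hm ?_
    simp [hg, h]
  have hNeg : (∑ᶠ m : ℕ, g (-(m : ℤ) - 1))
      = ∑ m ∈ M, b (-(m : ℤ) - n - 1) * a ((k : ℤ) + m + 1) := by
    have : ∀ m : ℕ, g (-(m : ℤ) - 1) = b (-(m : ℤ) - n - 1) * a ((k : ℤ) + m + 1) := by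
      intro m; simp only [hg]; ring_nf
    rw [finsum_congr this]
    refine finsum_eq_finset_sum_of_support_subset _ fun m hm => ?_
    refine hMmem m fun h => hm ?_
    simp [h]
  rw [step1, hsplit, hNat, hNeg]
  ring
end

section
/- Let H be the Hilbert space ℓ² of square-summable complex sequences indexed by ℕ with standard orthonormal basis (e_k), let a : ℤ → ℂ be finitely supported, and let Ha : H → H be a continuous linear operator with matrix entries ⟨Ha e_n, e_m⟩ = a(m+n+1) for all m, n ∈ ℕ. Then Ha has finite rank; in particular, Ha is a compact operator. -/
/-!
Every column `Ha eₙ` is supported on `{m | m + n + 1 ∈ supp a}`, so if `a` vanishes beyond `B`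
then every coordinate functional `f ↦ f m` with `m ≥ B` kills all basis vectors `eₙ`; being
continuous it then kills all of `ℓ²`. Hence the range of `Ha` consists of sequences supported in
`{0, …, B - 1}`, a finite-dimensional space, and an operator of finite rank is compact.
-/

open ENNReal

section General

variable {𝕜 : Type*} [NontriviallyNormedField 𝕜]

theorem isCompactOperator_of_finiteDimensional_range [LocallyCompactSpace 𝕜]
    {E F : Type*} [NormedAddCommGroup E] [NormedSpace 𝕜 E] [NormedAddCommGroup F]
    [NormedSpace 𝕜 F] (T : E →L[𝕜] F) [FiniteDimensional 𝕜 (LinearMap.range (T : E →ₗ[𝕜] F))] :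
    IsCompactOperator T := by
  let V := LinearMap.range (T : E →ₗ[𝕜] F)
  have : ProperSpace V := FiniteDimensional.proper 𝕜 V
  exact (isCompactOperator_of_locallyCompactSpace_dom
    (T.codRestrict V (LinearMap.mem_range_self (T : E →ₗ[𝕜] F)))).clm_comp V.subtypeL

variable {ι : Type*} {p : ℝ≥0∞}

theorem lp.continuousLinearMap_eq_zero_of_single [DecidableEq ι] [Fact (1 ≤ p)] {F : Type*}
    [AddCommMonoid F] [Module 𝕜 F] [TopologicalSpace F] [T2Space F] (hp : p ≠ ⊤) {T : lp (fun _ : ι => 𝕜) p →L[𝕜] F}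
    (h : ∀ i, T (lp.single p i 1) = 0) : T = 0 :=
  lp.ext_continuousLinearMap hp fun i => ContinuousLinearMap.ext_ring (by simpa using h i)

theorem lp.finiteDimensional_of_forall_apply_eq_zero {E : ι → Type*}
    [∀ i, NormedAddCommGroup (E i)] [∀ i, NormedSpace 𝕜 (E i)] [∀ i, FiniteDimensional 𝕜 (E i)]
    (s : Finset ι) (V : Submodule 𝕜 (lp E p)) (hV : ∀ f ∈ V, ∀ i ∉ s, f i = 0) :
    FiniteDimensional 𝕜 V := by
  let restrict : V →ₗ[𝕜] ∀ i : s, E i :=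
    LinearMap.pi fun i => (lp.evalₗ E p i).comp V.subtype
  refine FiniteDimensional.of_injective restrict fun f g hfg => Subtype.ext (lp.ext ?_)
  funext i
  by_cases hi : i ∈ s
  · exact congr_fun hfg ⟨i, hi⟩
  · rw [hV f f.2 i hi, hV g g.2 i hi]

end General

theorem hankel_apply_eq_zero_of_le {a : ℤ → ℂ} {B : ℤ} (hB : ∀ k, B < k → a k = 0)
    {Ha : lp (fun _ : ℕ => ℂ) 2 →L[ℂ] lp (fun _ : ℕ => ℂ) 2}
    (hHa : ∀ m n : ℕ, (Ha (lp.single 2 n 1)) m = a ((m : ℤ) + (n : ℤ) + 1))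
    (x : lp (fun _ : ℕ => ℂ) 2) {m : ℕ} (hm : B ≤ m) : Ha x m = 0 := by
  have hcoord : (lp.evalCLM ℂ (fun _ : ℕ => ℂ) 2 m).comp Ha = 0 :=
    lp.continuousLinearMap_eq_zero_of_single ofNat_ne_top fun n => by
      simpa [lp.evalCLM, hHa] using hB ((m : ℤ) + n + 1) (by omega)
  simpa [lp.evalCLM] using congr($hcoord x)

/-- A Hankel operator on `ℓ²` with finitely supported symbol coefficients has finite
rank; in particular, it is a compact operator. -/
theorem hankel_finite_rank_of_finitely_supported
    (a : ℤ → ℂ) (ha : (Function.support a).Finite)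
    (Ha : lp (fun _ : ℕ => ℂ) 2 →L[ℂ] lp (fun _ : ℕ => ℂ) 2)
    (hHa : ∀ m n : ℕ, (Ha (lp.single 2 n 1)) m = a ((m : ℤ) + (n : ℤ) + 1)) :
    FiniteDimensional ℂ (LinearMap.range (Ha : lp (fun _ : ℕ => ℂ) 2 →ₗ[ℂ] lp (fun _ : ℕ => ℂ) 2)) ∧
    IsCompactOperator Ha := by
  obtain ⟨B, hB⟩ := ha.bddAbove
  have hvanish : ∀ k, B < k → a k = 0 := fun k hk =>
    Function.notMem_support.mp fun hk' => (hB hk').not_gt hk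
  have hfin : FiniteDimensional ℂ
      (LinearMap.range (Ha : lp (fun _ : ℕ => ℂ) 2 →ₗ[ℂ] lp (fun _ : ℕ => ℂ) 2)) := by
    refine lp.finiteDimensional_of_forall_apply_eq_zero (Finset.range B.toNat) _ ?_
    rintro _ ⟨x, rfl⟩ m hm
    exact hankel_apply_eq_zero_of_le hvanish hHa x (by simp at hm; omega)
  exact ⟨hfin, isCompactOperator_of_finiteDimensional_range Ha⟩
end

section
/- Let H be the Hilbert space ℓ² of square-summable complex sequences indexed by ℕ with standard orthonormal basis (e_k). Let a, b, c : ℕ → ℂ be sequences with a(n) → α, b(n) → β, c(n) → γ as n → ∞, and let A, T : H → H be continuous linear operators whose matrix entries satisfy: ⟨A e_n, e_m⟩ = a(n) if m = n, b(m) if n = m + 1, c(n) if m = n + 1, and 0 otherwise; ⟨T e_n, e_m⟩ = α if m = n, β if n = m + 1, γ if m = n + 1, and 0 otherwise. Then A − T is a compact operator; that is, a tridiagonal operator whose diagonals converge is a compact perturbation of the Toeplitz operator built from the limiting diagonal values. -/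
/-!
The matrix of `D = A - T` is tridiagonal with entries `a n - α`, `b m - β`, `c n - γ` tending to
zero. A tridiagonal matrix with entries bounded by `δ` defines an operator of norm at most `3 δ`:
each row has at most three entries and each coordinate enters at most three rows. If `P_N` keeps
the first `N` coordinates, the matrix of `D ∘ (1 - P_N)` is tridiagonal with entries eventually
small, so `D` is the norm limit of the finite-rank operators `D ∘ P_N` and hence compact.
-/

open Filter Finset
open scoped lp ENNReal Topology

variable {𝕜 : Type*} [RCLike 𝕜]

theorem sum_Icc_pred_succ_le {g : ℕ → ℝ} (hg : 0 ≤ g) (m : ℕ) :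
    ∑ n ∈ Icc (m - 1) (m + 1), g n ≤ g (m - 1) + g m + g (m + 1) := by
  rcases m with _ | k
  · simpa [Finset.sum_Icc_succ_top] using hg 0
  · simp [Finset.sum_Icc_succ_top, add_assoc]

-- At `m = 0` the first summand repeats `f 0`, which is exactly the term the last one misses.
theorem hasSum_pred_add_self_add_succ {f : ℕ → ℝ} {S : ℝ} (hf : HasSum f S) :
    HasSum (fun m => f (m - 1) + f m + f (m + 1)) (3 * S) := by
  have hpred : HasSum (fun m => f (m - 1)) (S + f 0) :=
    (hasSum_nat_add_iff' 1).mp (by simpa using hf)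
  have hsucc : HasSum (fun m => f (m + 1)) (S - f 0) := by
    simpa using (hasSum_nat_add_iff' 1).mpr hf
  convert (hpred.add hf).add hsucc using 1
  ring

theorem ContinuousLinearMap.isCompactOperator_smulRight {E F : Type*} [NormedAddCommGroup E]
    [NormedSpace 𝕜 E] [NormedAddCommGroup F] [NormedSpace 𝕜 F] (φ : E →L[𝕜] 𝕜) (y : F) :
    IsCompactOperator (φ.smulRight y) :=
  (isCompactOperator_of_locallyCompactSpace_dom φ).clm_comp
    ((ContinuousLinearMap.id 𝕜 𝕜).smulRight y)

namespace lp

theorem hasSum_norm_sq {α : Type*} (f : ℓ²(α, 𝕜)) :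
    HasSum (fun i => ‖f i‖ ^ 2) (‖f‖ ^ 2) := by
  simpa using hasSum_norm (p := 2) (by norm_num) f

theorem hasSum_mul_apply_single {α β : Type*} [DecidableEq α] {p q : ℝ≥0∞}
    [Fact (1 ≤ p)] [Fact (1 ≤ q)] (hp : p ≠ ∞)
    (D : lp (fun _ : α => 𝕜) p →L[𝕜] lp (fun _ : β => 𝕜) q) (y : lp (fun _ : α => 𝕜) p) (m : β) :
    HasSum (fun n => y n * D (lp.single p n 1) m) (D y m) := by
  have h : HasSum (fun n => D (lp.single p n (y n)) m) (D y m) :=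
    ((lp.hasSum_single hp y).mapL D).mapL (lp.evalCLM 𝕜 (fun _ : β => 𝕜) q m)
  have hterm : ∀ n, D (lp.single p n (y n)) = y n • D (lp.single p n 1) := fun n => by
    rw [← map_smul, ← lp.single_smul (E := fun _ : α => 𝕜), smul_eq_mul, mul_one]
  simpa only [hterm, lp.coeFn_smul, Pi.smul_apply, smul_eq_mul] using h

section Truncation

variable {α : Type*} [DecidableEq α] {p : ℝ≥0∞} [Fact (1 ≤ p)]

variable (𝕜 p) in
noncomputable def truncation (s : Finset α) :
    lp (fun _ : α => 𝕜) p →L[𝕜] lp (fun _ : α => 𝕜) p :=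
  ∑ i ∈ s, (lp.evalCLM 𝕜 (fun _ : α => 𝕜) p i).smulRight (lp.single p i 1)

theorem truncation_apply (s : Finset α) (x : lp (fun _ : α => 𝕜) p) :
    truncation 𝕜 p s x = ∑ i ∈ s, lp.single p i (x i) := by
  simp only [truncation, FunLike.coe_sum, Finset.sum_apply,
    ContinuousLinearMap.smulRight_apply]
  refine Finset.sum_congr rfl fun i _ => ?_
  rw [← lp.single_smul (E := fun _ : α => 𝕜), smul_eq_mul, mul_one]
  rfl

theorem truncation_apply_apply (s : Finset α) (x : lp (fun _ : α => 𝕜) p) (j : α) :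
    truncation 𝕜 p s x j = if j ∈ s then x j else 0 := by
  rw [truncation_apply, lp.coeFn_sum, Finset.sum_apply]
  simp only [lp.single_apply, Finset.sum_pi_single]

theorem isCompactOperator_truncation (s : Finset α) :
    IsCompactOperator (truncation 𝕜 p s) :=
  Submodule.sum_mem (compactOperator (RingHom.id 𝕜) _ _) fun _ _ =>
    ContinuousLinearMap.isCompactOperator_smulRight _ _

theorem one_sub_truncation_single (s : Finset α) (n : α) (c : 𝕜) :
    (1 - truncation 𝕜 p s) (lp.single p n c) = if n ∈ s then 0 else lp.single p n c := by
  ext j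
  rw [sub_apply, one_apply_eq_self, lp.coeFn_sub, Pi.sub_apply, truncation_apply_apply]
  by_cases hj : j = n
  · subst hj; split_ifs <;> simp
  · split_ifs <;> simp [hj]

end Truncation

end lp

-- With truncated subtraction, `Icc (m - 1) (m + 1)` is `{n | |m - n| ≤ 1}` also for `m = 0`.
def IsTridiagonal (D : ℓ²(ℕ, 𝕜) →L[𝕜] ℓ²(ℕ, 𝕜)) : Prop :=
  ∀ m n, n ∉ Icc (m - 1) (m + 1) → D (lp.single 2 n 1) m = 0

namespace IsTridiagonal

variable {D : ℓ²(ℕ, 𝕜) →L[𝕜] ℓ²(ℕ, 𝕜)} {δ : ℝ}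

theorem norm_apply_le (hD : IsTridiagonal D) (hδ : ∀ m n, ‖D (lp.single 2 n 1) m‖ ≤ δ)
    (z : ℓ²(ℕ, 𝕜)) (m : ℕ) : ‖D z m‖ ≤ δ * (‖z (m - 1)‖ + ‖z m‖ + ‖z (m + 1)‖) := by
  have hδ0 : 0 ≤ δ := (norm_nonneg _).trans (hδ 0 0)
  have hrow : D z m = ∑ n ∈ Icc (m - 1) (m + 1), z n * D (lp.single 2 n 1) m :=
    (lp.hasSum_mul_apply_single (by norm_num) D z m).unique
      (hasSum_sum_of_ne_finset_zero fun n hn => by rw [hD m n hn, mul_zero])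
  calc ‖D z m‖ ≤ ∑ n ∈ Icc (m - 1) (m + 1), δ * ‖z n‖ := by
        rw [hrow]
        refine (norm_sum_le _ _).trans (sum_le_sum fun n _ => ?_)
        rw [norm_mul, mul_comm]
        exact mul_le_mul_of_nonneg_right (hδ m n) (norm_nonneg (z n))
    _ ≤ δ * ‖z (m - 1)‖ + δ * ‖z m‖ + δ * ‖z (m + 1)‖ :=
        sum_Icc_pred_succ_le (g := fun n => δ * ‖z n‖) (fun n => by positivity) m
    _ = δ * (‖z (m - 1)‖ + ‖z m‖ + ‖z (m + 1)‖) := by ring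

theorem opNorm_le (hD : IsTridiagonal D) (hδ : ∀ m n, ‖D (lp.single 2 n 1) m‖ ≤ δ) :
    ‖D‖ ≤ 3 * δ := by
  have hδ0 : 0 ≤ δ := (norm_nonneg _).trans (hδ 0 0)
  refine D.opNorm_le_bound (by positivity) fun z => ?_
  have hrow : ∀ m,
      ‖D z m‖ ^ 2 ≤ 3 * δ ^ 2 * (‖z (m - 1)‖ ^ 2 + ‖z m‖ ^ 2 + ‖z (m + 1)‖ ^ 2) := by
    intro m
    have h := pow_le_pow_left₀ (norm_nonneg _) (hD.norm_apply_le hδ z m) 2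
    nlinarith [sq_nonneg (‖z (m - 1)‖ - ‖z m‖), sq_nonneg (‖z m‖ - ‖z (m + 1)‖),
      sq_nonneg (‖z (m - 1)‖ - ‖z (m + 1)‖), sq_nonneg δ]
  have hsq : ‖D z‖ ^ 2 ≤ (3 * δ * ‖z‖) ^ 2 :=
    calc ‖D z‖ ^ 2 ≤ 3 * δ ^ 2 * (3 * ‖z‖ ^ 2) :=
          hasSum_le hrow (lp.hasSum_norm_sq _)
            ((hasSum_pred_add_self_add_succ (lp.hasSum_norm_sq z)).mul_left _)
      _ = (3 * δ * ‖z‖) ^ 2 := by ring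
  exact (pow_le_pow_iff_left₀ (norm_nonneg _) (by positivity) two_ne_zero).mp hsq

theorem comp_one_sub_truncation (hD : IsTridiagonal D) (s : Finset ℕ) :
    IsTridiagonal (D ∘L (1 - lp.truncation 𝕜 2 s)) := fun m n hn => by
  rw [ContinuousLinearMap.comp_apply, lp.one_sub_truncation_single]
  split_ifs
  · simp
  · exact hD m n hn

theorem norm_comp_one_sub_truncation_le (hD : IsTridiagonal D) {N : ℕ}
    (hδ : ∀ m n, N ≤ n → ‖D (lp.single 2 n 1) m‖ ≤ δ) (hδ0 : 0 ≤ δ) :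
    ‖D ∘L (1 - lp.truncation 𝕜 2 (range N))‖ ≤ 3 * δ := by
  refine (hD.comp_one_sub_truncation _).opNorm_le fun m n => ?_
  rw [ContinuousLinearMap.comp_apply, lp.one_sub_truncation_single]
  split_ifs with hn
  · simpa using hδ0
  · exact hδ m n (by simpa using hn)

theorem isCompactOperator (hD : IsTridiagonal D)
    (hcol : TendstoUniformly (fun n m => D (lp.single 2 n 1) m) 0 atTop) :
    IsCompactOperator D := by
  refine isCompactOperator_of_tendsto (F := fun N => D ∘L lp.truncation 𝕜 2 (range N))
    (Metric.tendsto_atTop.mpr fun ε hε => ?_)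
    (Eventually.of_forall fun N => (lp.isCompactOperator_truncation _).clm_comp D)
  obtain ⟨N, hN⟩ :=
    eventually_atTop.mp (Metric.tendstoUniformly_iff.mp hcol (ε / 4) (by positivity))
  refine ⟨N, fun K hK => ?_⟩
  have hsmall : ∀ m n, K ≤ n → ‖D (lp.single 2 n 1) m‖ ≤ ε / 4 := fun m n hn => by
    simpa using (hN n (hK.trans hn) m).le
  calc dist (D ∘L lp.truncation 𝕜 2 (range K)) D
      = ‖D ∘L (1 - lp.truncation 𝕜 2 (range K))‖ := by
        rw [dist_eq_norm', ContinuousLinearMap.comp_sub]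
        rfl
    _ ≤ 3 * (ε / 4) := hD.norm_comp_one_sub_truncation_le hsmall (by positivity)
    _ < ε := by linarith

end IsTridiagonal

def tridiagonalEntry (a b c : ℕ → 𝕜) (m n : ℕ) : 𝕜 :=
  if m = n then a n else if n = m + 1 then b m else if m = n + 1 then c n else 0

theorem tridiagonalEntry_sub (a b c a' b' c' : ℕ → 𝕜) (m n : ℕ) :
    tridiagonalEntry a b c m n - tridiagonalEntry a' b' c' m n =
      tridiagonalEntry (a - a') (b - b') (c - c') m n := by
  unfold tridiagonalEntry
  split_ifs <;> simp

theorem isTridiagonal_of_apply_single {D : ℓ²(ℕ, 𝕜) →L[𝕜] ℓ²(ℕ, 𝕜)} {a b c : ℕ → 𝕜}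
    (hD : ∀ m n, D (lp.single 2 n 1) m = tridiagonalEntry a b c m n) : IsTridiagonal D :=
  fun m n hn => by
    rw [hD, tridiagonalEntry]
    simp only [mem_Icc, not_and_or, not_le] at hn
    split_ifs <;> first | rfl | omega

theorem tendstoUniformly_tridiagonalEntry {a b c : ℕ → 𝕜} (ha : Tendsto a atTop (𝓝 0))
    (hb : Tendsto b atTop (𝓝 0)) (hc : Tendsto c atTop (𝓝 0)) :
    TendstoUniformly (fun n m => tridiagonalEntry a b c m n) 0 atTop := by
  rw [Metric.tendstoUniformly_iff]
  intro ε hε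
  have hb' : Tendsto (fun n => b (n - 1)) atTop (𝓝 0) := hb.comp (tendsto_sub_atTop_nat 1)
  filter_upwards [(ha.norm.eventually (gt_mem_nhds (by simpa using hε))),
    (hb'.norm.eventually (gt_mem_nhds (by simpa using hε))),
    (hc.norm.eventually (gt_mem_nhds (by simpa using hε)))] with n han hbn hcn m
  rw [Pi.zero_apply, dist_zero_left, tridiagonalEntry]
  split_ifs with h₁ h₂ h₃
  · exact han
  · simpa [h₂] using hbn
  · exact hcn
  · simpa using hε

/-- A tridiagonal operator on `ℓ²` whose diagonals converge is a compact perturbation of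
the tridiagonal Toeplitz operator built from the limiting diagonal values. -/
theorem tridiagonal_compact_perturbation_of_toeplitz
    (a b c : ℕ → ℂ) (α β γ : ℂ)
    (hA : Filter.Tendsto a Filter.atTop (nhds α))
    (hB : Filter.Tendsto b Filter.atTop (nhds β))
    (hC : Filter.Tendsto c Filter.atTop (nhds γ))
    (A T : lp (fun _ : ℕ => ℂ) 2 →L[ℂ] lp (fun _ : ℕ => ℂ) 2)
    (hAe : ∀ m n : ℕ, (A (lp.single 2 n 1)) m =
      if m = n then a n else if n = m + 1 then b m else if m = n + 1 then c n else 0)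
    (hTe : ∀ m n : ℕ, (T (lp.single 2 n 1)) m =
      if m = n then α else if n = m + 1 then β else if m = n + 1 then γ else 0) :
    IsCompactOperator (A - T) := by
  have hD : ∀ m n, (A - T) (lp.single 2 n 1) m =
      tridiagonalEntry (fun k => a k - α) (fun k => b k - β) (fun k => c k - γ) m n := by
    intro m n
    rw [sub_apply, lp.coeFn_sub, Pi.sub_apply, hAe, hTe]
    exact tridiagonalEntry_sub a b c (fun _ => α) (fun _ => β) (fun _ => γ) m n
  refine (isTridiagonal_of_apply_single hD).isCompactOperator ?_
  simp only [hD]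
  exact tendstoUniformly_tridiagonalEntry (tendsto_sub_nhds_zero_iff.mpr hA)
    (tendsto_sub_nhds_zero_iff.mpr hB) (tendsto_sub_nhds_zero_iff.mpr hC)
end

section
/- Let H be the Hilbert space ℓ² of square-summable complex sequences indexed by ℕ with standard orthonormal basis (e_k). Let a : ℤ → ℝ be finitely supported with a(−k) = a(k) for all k, and suppose there exists c > 0 such that a(0) + 2·Σ_{k≥1} a(k)·cos(kθ) ≥ c for all θ ∈ ℝ. If T : H → H is a continuous linear operator with matrix entries ⟨T e_n, e_m⟩ = a(m−n) for all m, n ∈ ℕ, then Re⟨T u, u⟩ ≥ c·‖u‖² for all u ∈ H, and T admits a continuous linear two-sided inverse. -/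
/-!
Write `σ(θ) = Σ a(k) e^{ikθ}` for the symbol and `F(θ) = Σ xₙ e^{inθ}` for a finitely supported
`x ∈ ℓ²`. Orthogonality of the exponentials on the circle gives `⟪x, T x⟫ = ∫ σ |F|²` and
`‖x‖² = ∫ |F|²` (normalised Haar measure), so `σ ≥ c` yields `Re ⟪T x, x⟫ ≥ c ‖x‖²`, which extends
to all of `ℓ²` because finitely supported vectors are dense. A coercive operator on a Hilbert
space is bounded below, hence injective with closed range, and a vector orthogonal to the range
satisfies `⟪T v, v⟫ = 0`, hence vanishes; so the operator is invertible.
-/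

open MeasureTheory Complex AddCircle ComplexConjugate
open scoped ComplexInnerProductSpace

section Fourier
variable {T : ℝ} [Fact (0 < T)]

theorem integral_fourier_haarAddCircle (k : ℤ) :
    ∫ t, fourier k t ∂(@haarAddCircle T _) = if k = 0 then 1 else 0 := by
  simpa [fourierCoeff, Pi.single_apply, eq_comm] using
    congr_fun (fourierCoeff_fourier (T := T) k) 0

theorem Continuous.integrable_haarAddCircle {E : Type*} [NormedAddCommGroup E]
    {f : AddCircle T → E} (hf : Continuous f) : Integrable f (@haarAddCircle T _) :=
  hf.integrable_of_hasCompactSupport (HasCompactSupport.of_compactSpace f)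

theorem integral_sum_fourier_mul_norm_sum_fourier_sq (b : ℤ → ℂ) (K : Finset ℤ)
    (hK : ∀ k ∉ K, b k = 0) (s : Finset ℕ) (x : ℕ → ℂ) :
    ∫ t, (∑ k ∈ K, b k * fourier k t) * ‖∑ n ∈ s, x n * fourier n t‖ ^ 2 ∂(@haarAddCircle T _)
      = ∑ m ∈ s, ∑ n ∈ s, conj (x m) * b (m - n) * x n := by
  have hexpand : ∀ t : AddCircle T,
      (∑ k ∈ K, b k * fourier k t) * ‖∑ n ∈ s, x n * fourier n t‖ ^ 2
        = ∑ m ∈ s, ∑ n ∈ s, ∑ k ∈ K, conj (x m) * b k * x n * fourier (k - m + n) t := by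
    intro t
    rw [← conj_mul', map_sum, Finset.sum_mul_sum, Finset.mul_sum]
    refine Finset.sum_congr rfl fun m _ => ?_
    rw [Finset.mul_sum]
    refine Finset.sum_congr rfl fun n _ => ?_
    rw [Finset.sum_mul]
    refine Finset.sum_congr rfl fun k _ => ?_
    rw [fourier_add, sub_eq_add_neg, fourier_add, fourier_neg, map_mul]
    ring
  have hint (z : ℂ) (j : ℤ) : Integrable (fun t => z * fourier j t) (@haarAddCircle T _) :=
    ((fourier j).continuous.const_mul z).integrable_haarAddCircle
  simp_rw [hexpand]
  rw [integral_finsetSum _ fun m _ => integrable_finsetSum _ fun n _ =>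
    integrable_finsetSum _ fun k _ => hint _ _]
  refine Finset.sum_congr rfl fun m _ => ?_
  rw [integral_finsetSum _ fun n _ => integrable_finsetSum _ fun k _ => hint _ _]
  refine Finset.sum_congr rfl fun n _ => ?_
  rw [integral_finsetSum _ fun k _ => hint _ _]
  have hindex : ∀ k : ℤ, k - m + n = 0 ↔ k = m - n := fun k => by omega
  simp_rw [integral_const_mul, integral_fourier_haarAddCircle, hindex, mul_ite, mul_one, mul_zero,
    Finset.sum_ite_eq']
  split_ifs with hmn
  · rfl
  · rw [hK _ hmn, mul_zero, zero_mul]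

theorem integral_norm_sum_fourier_sq (s : Finset ℕ) (x : ℕ → ℂ) :
    ∫ t, ‖∑ n ∈ s, x n * fourier n t‖ ^ 2 ∂(@haarAddCircle T _) = ∑ n ∈ s, ‖x n‖ ^ 2 := by
  -- the constant symbol `1`
  have h := integral_sum_fourier_mul_norm_sum_fourier_sq (T := T) (Pi.single 0 1) {0}
    (fun k hk => Pi.single_eq_of_ne (Finset.notMem_singleton.1 hk) 1) s x
  apply ofReal_injective
  push_cast [← integral_complex_ofReal]
  simpa [Pi.single_apply, sub_eq_zero, conj_mul'] using h

theorem mul_sum_norm_sq_le_re_sum_of_le_re_sum_fourier (b : ℤ → ℂ) (K : Finset ℤ)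
    (hK : ∀ k ∉ K, b k = 0) (c : ℝ) (hσ : ∀ t : AddCircle T, c ≤ (∑ k ∈ K, b k * fourier k t).re)
    (s : Finset ℕ) (x : ℕ → ℂ) :
    c * ∑ n ∈ s, ‖x n‖ ^ 2 ≤ (∑ m ∈ s, ∑ n ∈ s, conj (x m) * b (m - n) * x n).re := by
  set σ : AddCircle T → ℂ := fun t => ∑ k ∈ K, b k * fourier k t
  set F : AddCircle T → ℂ := fun t => ∑ n ∈ s, x n * fourier n t
  calc c * ∑ n ∈ s, ‖x n‖ ^ 2 = ∫ t, c * ‖F t‖ ^ 2 ∂haarAddCircle := by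
        rw [integral_const_mul, integral_norm_sum_fourier_sq]
    _ ≤ ∫ t, (σ t).re * ‖F t‖ ^ 2 ∂haarAddCircle :=
        integral_mono (by fun_prop : Continuous _).integrable_haarAddCircle
          (by fun_prop : Continuous _).integrable_haarAddCircle
          fun t => mul_le_mul_of_nonneg_right (hσ t) (sq_nonneg _)
    _ = (∫ t, σ t * ‖F t‖ ^ 2 ∂haarAddCircle).re := by
        rw [← reCLM_apply, ← reCLM.integral_comp_comm
          (by fun_prop : Continuous _).integrable_haarAddCircle]
        simp_rw [reCLM_apply, ← ofReal_pow, re_mul_ofReal]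
    _ = _ := by rw [integral_sum_fourier_mul_norm_sum_fourier_sq b K hK]

end Fourier

theorem Finset.sum_eq_zero_add_two_mul_finsum_of_even {R : Type*} [Semiring R]
    [TopologicalSpace R] [ContinuousAdd R] [T2Space R] {f : ℤ → R} (hf : ∀ k, f (-k) = f k)
    {K : Finset ℤ} (hK : ∀ k ∉ K, f k = 0) :
    ∑ k ∈ K, f k = f 0 + 2 * ∑ᶠ n : ℕ, f (n + 1) := by
  have hsupp : Function.HasFiniteSupport fun n : ℕ => f (n + 1) := by
    refine (K.finite_toSet.preimage (f := fun n : ℕ => (n : ℤ) + 1) ?_).subset ?_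
    · exact fun m _ n _ h => by simpa using h
    · exact fun n hn => by_contra fun h => hn (hK _ h)
  have hsum : Summable fun n : ℕ => f (n + 1) := summable_of_hasFiniteSupport hsupp
  have htsum : ∑' k, f k = ∑ k ∈ K, f k := tsum_eq_sum hK
  rw [← htsum, tsum_of_add_one_of_neg_add_one hsum (by simpa only [hf] using hsum)]
  simp only [hf, tsum_eq_finsum hsupp, two_mul]
  abel

theorem re_fourier_coe_two_pi (k : ℤ) (θ : ℝ) :
    (fourier k (θ : AddCircle (2 * Real.pi))).re = Real.cos (k * θ) := by
  rw [fourier_coe_apply, ← exp_ofReal_mul_I_re]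
  congr 2
  push_cast
  field_simp

namespace lp
variable {ι 𝕜 : Type*} [RCLike 𝕜] [DecidableEq ι]

theorem norm_sum_single_sq (s : Finset ι) (x : ι → 𝕜) :
    ‖∑ n ∈ s, lp.single 2 n (x n)‖ ^ 2 = ∑ n ∈ s, ‖x n‖ ^ 2 := by
  simpa using lp.norm_sum_single (p := 2) (by norm_num) x s

theorem inner_sum_single_map_sum_single
    (A : lp (fun _ : ι => 𝕜) 2 →L[𝕜] lp (fun _ : ι => 𝕜) 2) (s : Finset ι) (x : ι → 𝕜) :
    inner 𝕜 (∑ m ∈ s, lp.single 2 m (x m)) (A (∑ n ∈ s, lp.single 2 n (x n)))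
      = ∑ m ∈ s, ∑ n ∈ s, conj (x m) * A (lp.single (E := fun _ : ι => 𝕜) 2 n 1) m * x n := by
  have happly (m : ι) : A (∑ n ∈ s, lp.single 2 n (x n)) m
      = ∑ n ∈ s, A (lp.single (E := fun _ : ι => 𝕜) 2 n 1) m * x n := by
    rw [map_sum, lp.coeFn_sum, Finset.sum_apply]
    refine Finset.sum_congr rfl fun n _ => ?_
    have hsingle : lp.single 2 n (x n) = x n • lp.single (E := fun _ : ι => 𝕜) 2 n 1 := by
      rw [← lp.single_smul, smul_eq_mul, mul_one]
    rw [hsingle, map_smul, lp.coeFn_smul, Pi.smul_apply, smul_eq_mul, mul_comm]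
  rw [sum_inner]
  refine Finset.sum_congr rfl fun m _ => ?_
  rw [inner_single_left, happly, RCLike.inner_apply, Finset.sum_mul]
  exact Finset.sum_congr rfl fun n _ => by ring

end lp

namespace ContinuousLinearMap
variable {𝕜 E : Type*} [RCLike 𝕜] [NormedAddCommGroup E] [InnerProductSpace 𝕜 E]
  {A : E →L[𝕜] E} {c : ℝ}

theorem mul_norm_le_norm_apply_of_coercive
    (hA : ∀ u, c * ‖u‖ ^ 2 ≤ RCLike.re (inner 𝕜 (A u) u)) (u : E) : c * ‖u‖ ≤ ‖A u‖ := by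
  rcases (norm_nonneg u).eq_or_lt with hu | hu
  · simp [← hu]
  refine le_of_mul_le_mul_right ?_ hu
  calc c * ‖u‖ * ‖u‖ = c * ‖u‖ ^ 2 := by ring
    _ ≤ RCLike.re (inner 𝕜 (A u) u) := hA u
    _ ≤ ‖A u‖ * ‖u‖ := re_inner_le_norm _ _

theorem antilipschitz_of_coercive (hc : 0 < c)
    (hA : ∀ u, c * ‖u‖ ^ 2 ≤ RCLike.re (inner 𝕜 (A u) u)) :
    AntilipschitzWith (Real.toNNReal c⁻¹) A :=
  A.antilipschitz_of_bound fun u => by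
    rw [Real.coe_toNNReal _ (inv_nonneg.2 hc.le), inv_mul_eq_div, le_div_iff₀' hc]
    exact mul_norm_le_norm_apply_of_coercive hA u

theorem ker_eq_bot_of_coercive (hc : 0 < c)
    (hA : ∀ u, c * ‖u‖ ^ 2 ≤ RCLike.re (inner 𝕜 (A u) u)) : A.ker = ⊥ :=
  LinearMap.ker_eq_bot.2 (antilipschitz_of_coercive hc hA).injective

theorem range_eq_top_of_coercive [CompleteSpace E] (hc : 0 < c)
    (hA : ∀ u, c * ‖u‖ ^ 2 ≤ RCLike.re (inner 𝕜 (A u) u)) : A.range = ⊤ := by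
  have hclosed : IsClosed (A.range : Set E) :=
    (antilipschitz_of_coercive hc hA).isClosed_range A.uniformContinuous
  rw [← hclosed.submodule_topologicalClosure_eq, Submodule.topologicalClosure_eq_top_iff,
    Submodule.eq_bot_iff]
  intro v hv
  have hAv : inner 𝕜 (A v) v = 0 := (Submodule.mem_orthogonal _ v).1 hv _ ⟨v, rfl⟩
  have := hA v
  rw [hAv, map_zero] at this
  simpa [hc.ne'] using le_antisymm (nonpos_of_mul_nonpos_right this hc) (sq_nonneg ‖v‖)

end ContinuousLinearMap

local notation "ℓ²" => lp (fun _ : ℕ => ℂ) 2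

theorem mul_norm_sq_le_re_inner_of_toeplitz {T : ℝ} [Fact (0 < T)] (b : ℤ → ℂ) (K : Finset ℤ)
    (hK : ∀ k ∉ K, b k = 0) (c : ℝ)
    (hσ : ∀ t : AddCircle T, c ≤ (∑ k ∈ K, b k * fourier k t).re)
    (A : ℓ² →L[ℂ] ℓ²) (hA : ∀ m n : ℕ, A (lp.single 2 n 1) m = b (m - n)) (u : ℓ²) :
    c * ‖u‖ ^ 2 ≤ (⟪A u, u⟫).re := by
  have htrunc (s : Finset ℕ) : c * ‖∑ n ∈ s, lp.single 2 n (u n)‖ ^ 2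
      ≤ (⟪A (∑ n ∈ s, lp.single 2 n (u n)), ∑ n ∈ s, lp.single 2 n (u n)⟫).re := by
    rw [lp.norm_sum_single_sq, ← inner_conj_symm, conj_re, lp.inner_sum_single_map_sum_single]
    simp_rw [hA]
    exact mul_sum_norm_sq_le_re_sum_of_le_re_sum_fourier b K hK c hσ s u
  have hclosed : IsClosed {v : ℓ² | c * ‖v‖ ^ 2 ≤ (⟪A v, v⟫).re} :=
    isClosed_le (by fun_prop) (by fun_prop)
  exact hclosed.mem_of_tendsto (lp.hasSum_single ENNReal.ofNat_ne_top u)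
    (Filter.Eventually.of_forall htrunc)

/-- A banded self-adjoint Toeplitz operator on `ℓ²` whose (real) symbol
`a(0) + 2 Σ_{k≥1} a(k) cos(kθ)` is bounded below by `c > 0` is coercive and admits a
continuous two-sided inverse. -/
theorem toeplitz_coercive_invertible
    (a : ℤ → ℝ) (ha : (Function.support a).Finite)
    (hsymm : ∀ k : ℤ, a (-k) = a k)
    (c : ℝ) (hc : 0 < c)
    (hsymb : ∀ θ : ℝ, c ≤ a 0 + 2 * ∑ᶠ k : ℕ, a ((k : ℤ) + 1) * Real.cos (((k : ℝ) + 1) * θ))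
    (T : lp (fun _ : ℕ => ℂ) 2 →L[ℂ] lp (fun _ : ℕ => ℂ) 2)
    (hT : ∀ m n : ℕ, (T (lp.single 2 n 1)) m = (a ((m : ℤ) - (n : ℤ)) : ℂ)) :
    (∀ u : lp (fun _ : ℕ => ℂ) 2, c * ‖u‖ ^ 2 ≤ (⟪T u, u⟫).re) ∧
    (∃ S : lp (fun _ : ℕ => ℂ) 2 →L[ℂ] lp (fun _ : ℕ => ℂ) 2,
      S.comp T = ContinuousLinearMap.id ℂ (lp (fun _ : ℕ => ℂ) 2) ∧
      T.comp S = ContinuousLinearMap.id ℂ (lp (fun _ : ℕ => ℂ) 2)) := by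
  have : Fact (0 < 2 * Real.pi) := ⟨Real.two_pi_pos⟩
  have hK : ∀ k ∉ ha.toFinset, a k = 0 := by simp
  have hσ (t : AddCircle (2 * Real.pi)) :
      c ≤ (∑ k ∈ ha.toFinset, (a k : ℂ) * fourier k t).re := by
    induction t using QuotientAddGroup.induction_on with | H θ => ?_
    simp_rw [re_sum, re_ofReal_mul, re_fourier_coe_two_pi]
    rw [Finset.sum_eq_zero_add_two_mul_finsum_of_even (fun k => by simp [hsymm])
      (fun k hk => by simp [hK k hk])]
    simpa using hsymb θ
  have hcoer := mul_norm_sq_le_re_inner_of_toeplitz (fun k => (a k : ℂ)) ha.toFinset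
    (fun k hk => by simp [hK k hk]) c hσ T hT
  refine ⟨hcoer, ?_⟩
  let e := ContinuousLinearEquiv.ofBijective T
    (ContinuousLinearMap.ker_eq_bot_of_coercive hc hcoer)
    (ContinuousLinearMap.range_eq_top_of_coercive hc hcoer)
  have he : (e : lp (fun _ : ℕ => ℂ) 2 →L[ℂ] lp (fun _ : ℕ => ℂ) 2) = T :=
    ContinuousLinearEquiv.coe_ofBijective _ _ _
  exact ⟨e.symm, he ▸ e.coe_symm_comp_coe, he ▸ e.coe_comp_coe_symm⟩
end
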